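/- arXiv:1609.04852 — 2 statements merged into one kernel-verified Lean document; each statement's English description precedes it below -/
import Mathlib

section
/- Let b ≥ 2 and m ≥ 2 be integers and set c := b^m. If X is a base-c Benford random variable, then X is also base-b Benford. -/
/-!
Since `log_b x = m · log_{b^m} x`, the fractional part of `log_b X` is `⟨m · ⟨log_{b^m} X⟩⟩`.
Viewing `[0,1)` as the circle `ℝ/ℤ`, the map `t ↦ ⟨m t⟩` is multiplication by `m`, a surjective
endomorphism of a compact group, hence it preserves Haar measure, i.e. the uniform distribution.
-/

open MeasureTheory Set

theorem Real.logb_pow_base (b x : ℝ) (m : ℕ) : Real.logb (b ^ m) x = Real.logb b x / m := by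
  rw [Real.logb, Real.logb, Real.log_pow, div_div, mul_comm]

theorem Int.fract_intCast_mul_fract {R : Type*} [Ring R] [LinearOrder R] [IsStrictOrderedRing R]
    [FloorRing R] (n : ℤ) (t : R) : Int.fract (n * Int.fract t) = Int.fract (n * t) := by
  conv_rhs => rw [← Int.fract_add_floor t, mul_add, ← Int.cast_mul, Int.fract_add_intCast]

namespace AddCircle

variable (T : ℝ) [Fact (0 < T)]

theorem measurePreserving_mk_Ico (t : ℝ) :
    MeasurePreserving ((↑) : ℝ → AddCircle T) (volume.restrict (Ico t (t + T))) volume := by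
  rw [Measure.restrict_congr_set Ico_ae_eq_Ioc]
  exact AddCircle.measurePreserving_mk T t

theorem measurePreserving_coe_equivIco (t : ℝ) :
    MeasurePreserving (fun y : AddCircle T ↦ (equivIco T t y : ℝ)) volume
      (volume.restrict (Ico t (t + T))) := by
  have hmeas : Measurable (fun y : AddCircle T ↦ (equivIco T t y : ℝ)) :=
    measurable_subtype_coe.comp (measurableEquivIco T t).measurable
  refine ⟨hmeas, ?_⟩
  have hinv : (fun y : AddCircle T ↦ (equivIco T t y : ℝ)) ∘ ((↑) : ℝ → AddCircle T)
      =ᵐ[volume.restrict (Ico t (t + T))] id :=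
    (ae_restrict_iff' measurableSet_Ico).2 <| .of_forall fun x hx ↦ equivIco_coe_of_mem hx
  rw [← (measurePreserving_mk_Ico T t).map_eq, Measure.map_map hmeas AddCircle.measurable_mk',
    Measure.map_congr hinv, Measure.map_id]

end AddCircle

theorem measurePreserving_fract_intCast_mul {n : ℤ} (hn : n ≠ 0) :
    MeasurePreserving (fun t : ℝ ↦ Int.fract (n * t)) (volume.restrict (Ico (0 : ℝ) 1))
      (volume.restrict (Ico (0 : ℝ) 1)) := by
  have : Fact ((0 : ℝ) < 1) := ⟨one_pos⟩
  have hmk := AddCircle.measurePreserving_mk_Ico (1 : ℝ) 0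
  have hrep := AddCircle.measurePreserving_coe_equivIco (1 : ℝ) 0
  have hmul : MeasurePreserving (fun y : AddCircle (1 : ℝ) ↦ n • y) volume volume :=
    Measure.measurePreserving_zsmul volume hn
  rw [zero_add] at hmk
  convert hrep.comp (hmul.comp hmk) using 1
  · funext t
    simp only [Function.comp_apply, ← AddCircle.coe_zsmul, zsmul_eq_mul,
      AddCircle.coe_equivIco_mk_apply, div_one, mul_one]
  · rw [zero_add]

theorem benford_of_benford_pow_base_general
    {Ω : Type*} [MeasurableSpace Ω] (ℙ : Measure Ω)
    (b m : ℕ) (hm : 2 ≤ m)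
    (X : Ω → ℝ) (hX : Measurable X)
    (hben : Measure.map (fun ω => Int.fract (Real.logb (b ^ m : ℕ) (X ω))) ℙ
      = volume.restrict (Set.Ico (0 : ℝ) 1)) :
    Measure.map (fun ω => Int.fract (Real.logb b (X ω))) ℙ
      = volume.restrict (Set.Ico (0 : ℝ) 1) := by
  have hm0 : m ≠ 0 := by omega
  have hfract : (fun ω => Int.fract (Real.logb b (X ω)))
      = (fun t : ℝ ↦ Int.fract ((m : ℤ) * t))
        ∘ (fun ω => Int.fract (Real.logb (b ^ m : ℕ) (X ω))) := by
    funext ω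
    rw [Function.comp_apply, Int.fract_intCast_mul_fract, Nat.cast_pow, Real.logb_pow_base,
      Int.cast_natCast, mul_div_cancel₀ _ (Nat.cast_ne_zero.2 hm0)]
  have hmeas : Measurable (fun ω => Int.fract (Real.logb (b ^ m : ℕ) (X ω))) :=
    ((Real.measurable_log.comp hX).div_const _).fract
  rw [hfract, ← Measure.map_map (measurable_const_mul _).fract hmeas, hben,
    (measurePreserving_fract_intCast_mul (Int.natCast_ne_zero.2 hm0)).map_eq]

/-- If `X` is base-`b^m` Benford (with `m ≥ 2`), then `X` is base-`b` Benford. -/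
theorem benford_of_benford_pow_base
    {Ω : Type*} [MeasurableSpace Ω] (ℙ : Measure Ω) [IsProbabilityMeasure ℙ]
    (b m : ℕ) (hb : 2 ≤ b) (hm : 2 ≤ m)
    (X : Ω → ℝ) (hX : Measurable X)
    (hpos : ℙ {ω | 0 < X ω} = 1)
    (hben : Measure.map (fun ω => Int.fract (Real.logb (b ^ m : ℕ) (X ω))) ℙ
      = volume.restrict (Set.Ico (0 : ℝ) 1)) :
    Measure.map (fun ω => Int.fract (Real.logb b (X ω))) ℙ
      = volume.restrict (Set.Ico (0 : ℝ) 1) :=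
  benford_of_benford_pow_base_general ℙ b m hm X hX hben
end

section
/- Let b ≥ 2 and c ≥ 2 be any two distinct integers. Then there exists a probability space and a random variable X on it such that X is both base-b Benford and base-c Benford. -/
/-! Take `U, V` independent and uniform on `[0, 1)` and `X = b ^ U * c ^ V`. Then
`log_b X = U + V log_b c`, and conditionally on `V` this is uniform on an interval of length
one, which `Int.fract` maps to the uniform law on `[0, 1)`. Symmetrically for `c`. -/

open MeasureTheory Set Real

theorem map_fract_volume_restrict_Ico (a : ℝ) :
    (volume.restrict (Ico a (a + 1))).map Int.fract = volume.restrict (Ico (0 : ℝ) 1) := by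
  set F : UnitAddCircle → ℝ := fun x => (AddCircle.measurableEquivIco 1 0 x : ℝ)
  have hF : Measurable F :=
    measurable_subtype_coe.comp (AddCircle.measurableEquivIco 1 0).measurable
  have hF_mk : F ∘ (↑) = Int.fract := funext fun x => by
    have := AddCircle.coe_equivIco_mk_apply (p := (1 : ℝ)) x
    rw [div_one, mul_one] at this
    exact this
  -- `ℝ → ℝ / ℤ` sends Lebesgue measure on any unit interval to Haar measure.
  have h_circle : ∀ a : ℝ,
      (volume.restrict (Ico a (a + 1))).map Int.fract = (volume : Measure UnitAddCircle).map F := by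
    intro a
    rw [Measure.restrict_congr_set Ico_ae_eq_Ioc, ← (UnitAddCircle.measurePreserving_mk a).map_eq,
      Measure.map_map hF AddCircle.measurable_mk', hF_mk]
  have h_fract_eq_id : (Int.fract : ℝ → ℝ) =ᵐ[volume.restrict (Ico 0 1)] id :=
    (ae_restrict_iff' measurableSet_Ico).2 (ae_of_all _ fun x hx => Int.fract_eq_self.2 hx)
  rw [h_circle a, ← h_circle 0, zero_add, Measure.map_congr h_fract_eq_id, Measure.map_id]

theorem map_fract_add_volume_restrict_Ico (t : ℝ) :
    (volume.restrict (Ico (0 : ℝ) 1)).map (fun u => Int.fract (u + t)) =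
      volume.restrict (Ico (0 : ℝ) 1) := by
  have h_shift :
      (volume.restrict (Ico (0 : ℝ) 1)).map (· + t) = volume.restrict (Ico t (t + 1)) := by
    simpa using ((measurePreserving_add_right volume t).restrict_preimage
      (measurableSet_Ico (a := t) (b := t + 1))).map_eq
  calc (volume.restrict (Ico (0 : ℝ) 1)).map (fun u => Int.fract (u + t))
      = ((volume.restrict (Ico (0 : ℝ) 1)).map (· + t)).map Int.fract :=
        (Measure.map_map measurable_fract (measurable_add_const t)).symm
    _ = volume.restrict (Ico (0 : ℝ) 1) := by rw [h_shift, map_fract_volume_restrict_Ico]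

theorem MeasureTheory.Measure.map_prod_eq_of_forall_map_eq {α β γ : Type*} [MeasurableSpace α]
    [MeasurableSpace β] [MeasurableSpace γ] {μ : Measure α} {ν : Measure β} [SFinite μ]
    [IsProbabilityMeasure ν]
    {f : α × β → γ} (hf : Measurable f) {ρ : Measure γ}
    (h : ∀ y, μ.map (fun x => f (x, y)) = ρ) : (μ.prod ν).map f = ρ := by
  ext s hs
  rw [Measure.map_apply hf hs, Measure.prod_apply_symm (hf hs)]
  have h_slice : ∀ y, μ ((fun x => (x, y)) ⁻¹' (f ⁻¹' s)) = ρ s := fun y => by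
    rw [← h y]
    exact (Measure.map_apply (by fun_prop) hs).symm
  simp [h_slice]

instance : IsProbabilityMeasure (volume.restrict (Ico (0 : ℝ) 1)) :=
  ⟨by simp⟩

section

variable {β : Type*} [MeasurableSpace β] {ν : Measure β} [IsProbabilityMeasure ν]
  {g : β → ℝ}

theorem map_fract_add_prod_left (hg : Measurable g) :
    ((volume.restrict (Ico (0 : ℝ) 1)).prod ν).map (fun p => Int.fract (p.1 + g p.2)) =
      volume.restrict (Ico (0 : ℝ) 1) :=
  Measure.map_prod_eq_of_forall_map_eq (by fun_prop) fun y =>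
    map_fract_add_volume_restrict_Ico (g y)

theorem map_fract_add_prod_right (hg : Measurable g) :
    (ν.prod (volume.restrict (Ico (0 : ℝ) 1))).map (fun p => Int.fract (p.2 + g p.1)) =
      volume.restrict (Ico (0 : ℝ) 1) := by
  rw [← Measure.prod_swap, Measure.map_map (by fun_prop) measurable_swap]
  exact map_fract_add_prod_left hg

end

theorem logb_exp_mul_log_add {b : ℝ} (hb : log b ≠ 0) (u w : ℝ) :
    logb b (exp (u * log b + w)) = u + w / log b := by
  rw [logb, log_exp]
  field_simp

theorem exists_benford_two_bases_general
    (b c : ℕ) (hb : 2 ≤ b) (hc : 2 ≤ c) :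
    ∃ (Ω : Type) (_ : MeasurableSpace Ω) (ℙ : Measure Ω) (_ : IsProbabilityMeasure ℙ)
      (X : Ω → ℝ), Measurable X ∧
      ℙ {ω | 0 < X ω} = 1 ∧
      Measure.map (fun ω => Int.fract (Real.logb b (X ω))) ℙ
        = volume.restrict (Set.Ico (0 : ℝ) 1) ∧
      Measure.map (fun ω => Int.fract (Real.logb c (X ω))) ℙ
        = volume.restrict (Set.Ico (0 : ℝ) 1) := by
  have log_ne_zero : ∀ {n : ℕ}, 2 ≤ n → log n ≠ 0 := fun hn =>
    (log_pos (Nat.one_lt_cast.2 hn)).ne'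
  set U := volume.restrict (Ico (0 : ℝ) 1)
  refine ⟨ℝ × ℝ, inferInstance, U.prod U, inferInstance,
    fun p => exp (p.1 * log b + p.2 * log c), by fun_prop, by simp [exp_pos], ?_, ?_⟩
  · simp_rw [logb_exp_mul_log_add (log_ne_zero hb)]
    exact map_fract_add_prod_left (g := fun y => y * log c / log b) (by fun_prop)
  · simp_rw [add_comm (_ * log b), logb_exp_mul_log_add (log_ne_zero hc)]
    exact map_fract_add_prod_right (g := fun x => x * log b / log c) (by fun_prop)

/-- For any two distinct integer bases `b, c ≥ 2`, there exists a random
variable that is simultaneously base-`b` Benford and base-`c` Benford. -/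
theorem exists_benford_two_bases
    (b c : ℕ) (hb : 2 ≤ b) (hc : 2 ≤ c) (hbc : b ≠ c) :
    ∃ (Ω : Type) (_ : MeasurableSpace Ω) (ℙ : Measure Ω) (_ : IsProbabilityMeasure ℙ)
      (X : Ω → ℝ), Measurable X ∧
      ℙ {ω | 0 < X ω} = 1 ∧
      Measure.map (fun ω => Int.fract (Real.logb b (X ω))) ℙ
        = volume.restrict (Set.Ico (0 : ℝ) 1) ∧
      Measure.map (fun ω => Int.fract (Real.logb c (X ω))) ℙ
        = volume.restrict (Set.Ico (0 : ℝ) 1) :=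
  exists_benford_two_bases_general b c hb hc
end
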